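/- arXiv:2501.16560 — 2 statements merged into one kernel-verified Lean document; each statement's English description precedes it below -/
import Mathlib

section
/- If ∑_{t=1}^∞ d_t = ∞, then every equilibrium is bubbleless. -/
open Filter Topology Set

noncomputable section

/-- Standing assumptions on the production function `f` with derivative `f'` and
second derivative `f''`: `f : (0,∞) → (0,∞)` is twice continuously differentiable,
`f' > 0`, `f'' < 0`, `f'(k) → ∞` as `k → 0+`, and `lim_{k→∞} f'(k) < G`. -/
def ProdAssump (G : ℝ) (f f' f'' : ℝ → ℝ) : Prop :=
  0 < G ∧
  (∀ k > (0:ℝ), 0 < f k) ∧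
  (∀ k > (0:ℝ), HasDerivAt f (f' k) k) ∧
  (∀ k > (0:ℝ), HasDerivAt f' (f'' k) k) ∧
  ContinuousOn f'' (Ioi 0) ∧
  (∀ k > (0:ℝ), 0 < f' k) ∧
  (∀ k > (0:ℝ), f'' k < 0) ∧
  Tendsto f' (nhdsWithin 0 (Ioi 0)) atTop ∧
  (∃ L < G, Tendsto f' atTop (nhds L))

/-- Standing assumptions on the savings function: continuous, `0 < s(w,R) < w`,
strictly increasing in `w`, nondecreasing in `R`. -/
def SavAssump (s : ℝ → ℝ → ℝ) : Prop :=
  ContinuousOn (fun wR : ℝ × ℝ => s wR.1 wR.2) (Ioi 0 ×ˢ Ioi 0) ∧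
  (∀ w > (0:ℝ), ∀ R > (0:ℝ), 0 < s w R ∧ s w R < w) ∧
  (∀ R > (0:ℝ), StrictMonoOn (fun w => s w R) (Ioi 0)) ∧
  (∀ w > (0:ℝ), MonotoneOn (fun R => s w R) (Ioi 0))

/-- The savings function arises from a continuous, quasi-concave, strictly increasing
utility `U` on `(0,∞)²`: `s w R` is the unique maximizer of `σ ↦ U (w - σ) (R σ)`
over `(0, w)`. -/
def SavFromUtility (s : ℝ → ℝ → ℝ) : Prop :=
  ∃ U : ℝ → ℝ → ℝ,
    ContinuousOn (fun c : ℝ × ℝ => U c.1 c.2) (Ioi 0 ×ˢ Ioi 0) ∧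
    QuasiconcaveOn ℝ (Ioi 0 ×ˢ Ioi 0) (fun c : ℝ × ℝ => U c.1 c.2) ∧
    (∀ c c' : ℝ × ℝ, c ∈ Ioi (0:ℝ) ×ˢ Ioi (0:ℝ) → c' ∈ Ioi (0:ℝ) ×ˢ Ioi (0:ℝ) →
      c.1 ≤ c'.1 → c.2 ≤ c'.2 → c ≠ c' → U c.1 c.2 < U c'.1 c'.2) ∧
    (∀ w > (0:ℝ), ∀ R > (0:ℝ), s w R ∈ Ioo 0 w ∧
      ∀ σ ∈ Ioo (0:ℝ) w, σ ≠ s w R → U (w - σ) (R * σ) < U (w - s w R) (R * s w R))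

/-- An equilibrium: sequences `k, p` with `k t > 0`, `p t ≥ 0`, `k 0 = k₀`,
the capital accumulation equation and the no-arbitrage price equation. -/
def IsEquilibrium (G : ℝ) (f f' : ℝ → ℝ) (s : ℝ → ℝ → ℝ) (k0 : ℝ) (d : ℕ → ℝ)
    (k p : ℕ → ℝ) : Prop :=
  (∀ t, 0 < k t) ∧ (∀ t, 0 ≤ p t) ∧ k 0 = k0 ∧
  (∀ t, G * k (t + 1) + p t = s (f (k t) - k t * f' (k t)) (f' (k (t + 1)))) ∧
  (∀ t, p (t + 1) = f' (k (t + 1)) / G * p t - d (t + 1))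

/-- Arrow–Debreu date-0 price `q_t = 1/(R_1 ⋯ R_t)` where `R_t = f'(k_t)`. -/
def qseq (f' : ℝ → ℝ) (k : ℕ → ℝ) (t : ℕ) : ℝ :=
  (∏ i ∈ Finset.range t, f' (k (i + 1)))⁻¹

/-- Undetrended dividend `D_t = G^t d_t`. -/
def Dseq (G : ℝ) (d : ℕ → ℝ) (t : ℕ) : ℝ := G ^ t * d t

/-- Detrended fundamental value `v_t = G^{-t} q_t^{-1} ∑_{s>t} q_s D_s`. -/
def fundval (G : ℝ) (f' : ℝ → ℝ) (k : ℕ → ℝ) (d : ℕ → ℝ) (t : ℕ) : ℝ :=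
  (G ^ t)⁻¹ * (qseq f' k t)⁻¹ * ∑' n : ℕ, qseq f' k (t + 1 + n) * Dseq G d (t + 1 + n)

/-- Detrended bubble component `b_t = p_t - v_t`. -/
def bubble (G : ℝ) (f' : ℝ → ℝ) (k p : ℕ → ℝ) (d : ℕ → ℝ) (t : ℕ) : ℝ :=
  p t - fundval G f' k d t

/-- An equilibrium is bubbleless if `b_t = 0` for all `t`. -/
def Bubbleless (G : ℝ) (f' : ℝ → ℝ) (k p : ℕ → ℝ) (d : ℕ → ℝ) : Prop :=
  ∀ t, bubble G f' k p d t = 0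

/-- An equilibrium is asymptotically bubbly if `liminf_{t→∞} b_t > 0`. -/
def AsympBubbly (G : ℝ) (f' : ℝ → ℝ) (k p : ℕ → ℝ) (d : ℕ → ℝ) : Prop :=
  0 < atTop.liminf (bubble G f' k p d)

/-- Long-run dividend growth rate `G_d = limsup_{t→∞} D_t^{1/t}` (as an extended real). -/
def GdGrowth (G : ℝ) (d : ℕ → ℝ) : EReal :=
  atTop.limsup (fun t : ℕ => ((Dseq G d t ^ ((t : ℝ)⁻¹) : ℝ) : EReal))

/-- `x` solves the equation `G x + p = s(f(k) - k f'(k), f'(x))` with `x > 0`;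
when the solution exists it is unique and denoted `g(k,p)`. -/
def IsGsol (G : ℝ) (f f' : ℝ → ℝ) (s : ℝ → ℝ → ℝ) (k p x : ℝ) : Prop :=
  0 < x ∧ G * x + p = s (f k - k * f' k) (f' x)

/-- Set of positive steady states: `𝒦 = {k > 0 : g(k,0) = k}`. -/
def Ksteady (G : ℝ) (f f' : ℝ → ℝ) (s : ℝ → ℝ → ℝ) : Set ℝ :=
  {k : ℝ | 0 < k ∧ IsGsol G f f' s k 0 k}

/-- The equilibrium set `𝒫₀` of initial prices. -/
def P0set (G : ℝ) (f f' : ℝ → ℝ) (s : ℝ → ℝ → ℝ) (k0 : ℝ) (d : ℕ → ℝ) : Set ℝ :=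
  {p0 : ℝ | ∃ k p : ℕ → ℝ, IsEquilibrium G f f' s k0 d k p ∧ p 0 = p0}

/-!
Discount by `Q_t = G^t q_t`. The price equation becomes
`Q_{t+1} p_{t+1} = Q_t p_t - Q_{t+1} d_{t+1}`, so the discounted dividends `Q_{t+1} d_{t+1}` are
summable and the discounted bubble `Q_t b_t` is a constant `L ≥ 0`. Since `f k ≤ G k` for large
`k`, capital and hence prices stay below some `C`. If `L > 0`, then `L ≤ Q_t p_t ≤ C Q_t` bounds
`Q_t` away from zero, and `∑ d_t` converges.
-/

section Concave

variable {f f' : ℝ → ℝ}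

theorem le_add_mul_sub_of_antitoneOn {D : Set ℝ} (hD : Convex ℝ D)
    (hf : ∀ x ∈ D, HasDerivAt f (f' x) x) (hf' : AntitoneOn f' D) {x y : ℝ}
    (hx : x ∈ D) (hy : y ∈ D) : f y ≤ f x + f' x * (y - x) := by
  have hIcc : ∀ {a b}, a ∈ D → b ∈ D → Icc a b ⊆ D := fun ha hb => hD.ordConnected.out ha hb
  have hmvt : ∀ {a b}, a ∈ D → b ∈ D → a < b → ∃ ξ ∈ Ioo a b, f' ξ * (b - a) = f b - f a := by
    intro a b ha hb hab
    obtain ⟨ξ, hξ, h⟩ := exists_hasDerivAt_eq_slope f f' hab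
      (fun z hz => (hf z (hIcc ha hb hz)).continuousAt.continuousWithinAt)
      (fun z hz => hf z (hIcc ha hb (Ioo_subset_Icc_self hz)))
    exact ⟨ξ, hξ, by rw [h, div_mul_cancel₀ _ (sub_pos.2 hab).ne']⟩
  rcases lt_trichotomy x y with hxy | rfl | hyx
  · obtain ⟨ξ, hξ, h⟩ := hmvt hx hy hxy
    have : f' ξ ≤ f' x := hf' hx (hIcc hx hy (Ioo_subset_Icc_self hξ)) hξ.1.le
    nlinarith
  · simp
  · obtain ⟨ξ, hξ, h⟩ := hmvt hy hx hyx
    have : f' x ≤ f' ξ := hf' (hIcc hy hx (Ioo_subset_Icc_self hξ)) hx hξ.2.le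
    nlinarith

theorem sub_mul_deriv_pos (hpos : ∀ x > 0, 0 < f x) (hf : ∀ x > 0, HasDerivAt f (f' x) x)
    (hf' : StrictAntiOn f' (Ioi 0)) {k : ℝ} (hk : 0 < k) : 0 < f k - k * f' k := by
  have htangent : ∀ {x y : ℝ}, 0 < x → 0 < y → f y ≤ f x + f' x * (y - x) :=
    le_add_mul_sub_of_antitoneOn (convex_Ioi 0) hf hf'.antitoneOn
  have hnonneg : ∀ x > 0, 0 ≤ f x - x * f' x := by
    intro x hx
    have hlim : Tendsto (fun y : ℝ => -y * f' x) (𝓝[>] 0) (𝓝 0) := by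
      apply tendsto_nhdsWithin_of_tendsto_nhds
      exact (by fun_prop : Continuous fun y : ℝ => -y * f' x).tendsto' 0 0 (by simp)
    -- `f x - x f' x ≥ f y - y f' x > -y f' x` for every `y > 0`; let `y → 0⁺`
    refine le_of_tendsto hlim ?_
    filter_upwards [self_mem_nhdsWithin] with y hy
    nlinarith [htangent hx hy, hpos y hy]
  calc 0 ≤ f (k / 2) - k / 2 * f' (k / 2) := hnonneg _ (half_pos hk)
    _ < f (k / 2) - k / 2 * f' k := by
      have := hf' (half_pos hk) hk (half_lt_self hk)
      nlinarith
    _ ≤ f k - k * f' k := by linarith [htangent hk (half_pos hk)]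

end Concave

section Telescoping

variable {a c : ℕ → ℝ}

theorem sum_range_eq_sub_of_succ_eq_sub (hrec : ∀ t, a (t + 1) = a t - c t) (t : ℕ) :
    ∑ i ∈ Finset.range t, c i = a 0 - a t := by
  rw [← Finset.sum_range_sub']
  exact Finset.sum_congr rfl fun i _ => by linarith [hrec i]

theorem summable_of_succ_eq_sub (hrec : ∀ t, a (t + 1) = a t - c t) (ha : ∀ t, 0 ≤ a t)
    (hc : ∀ t, 0 ≤ c t) : Summable c :=
  summable_of_sum_range_le hc fun t => by
    linarith [sum_range_eq_sub_of_succ_eq_sub hrec t, ha t]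

theorem tsum_le_of_succ_eq_sub (hrec : ∀ t, a (t + 1) = a t - c t) (ha : ∀ t, 0 ≤ a t)
    (hc : ∀ t, 0 ≤ c t) : ∑' t, c t ≤ a 0 :=
  Real.tsum_le_of_sum_range_le hc fun t => by
    linarith [sum_range_eq_sub_of_succ_eq_sub hrec t, ha t]

theorem sub_tsum_nat_add_eq_of_succ_eq_sub (hrec : ∀ t, a (t + 1) = a t - c t) (hc : Summable c)
    (t : ℕ) :
    a t - ∑' n, c (n + t) = a 0 - ∑' n, c n := by
  rw [← hc.sum_add_tsum_nat_add t, sum_range_eq_sub_of_succ_eq_sub hrec t]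
  ring

end Telescoping

theorem Summable.of_mul_left_of_le {Q d : ℕ → ℝ} {m : ℝ} (hm : 0 < m) (hQ : ∀ t, m ≤ Q t)
    (hd : ∀ t, 0 ≤ d t) (h : Summable fun t => Q t * d t) : Summable d :=
  (h.mul_left m⁻¹).of_nonneg_of_le hd fun t => by
    rw [le_inv_mul_iff₀ hm]
    exact mul_le_mul_of_nonneg_right (hQ t) (hd t)

namespace ProdAssump

variable {G : ℝ} {f f' f'' : ℝ → ℝ}

theorem strictAntiOn_deriv (hf : ProdAssump G f f' f'') : StrictAntiOn f' (Ioi 0) := by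
  obtain ⟨-, -, -, hdf', -, -, hneg, -⟩ := hf
  refine strictAntiOn_of_hasDerivWithinAt_neg (f' := f'') (convex_Ioi 0)
    (fun x hx => (hdf' x hx).continuousAt.continuousWithinAt) (fun x hx => ?_) (fun x hx => ?_)
  · rw [interior_Ioi] at hx ⊢
    exact (hdf' x hx).hasDerivWithinAt
  · rw [interior_Ioi] at hx
    exact hneg x hx

theorem deriv_pos (hf : ProdAssump G f f' f'') : ∀ x > 0, 0 < f' x :=
  hf.2.2.2.2.2.1

theorem le_tangent (hf : ProdAssump G f f' f'') {x y : ℝ} (hx : 0 < x) (hy : 0 < y) :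
    f y ≤ f x + f' x * (y - x) :=
  le_add_mul_sub_of_antitoneOn (convex_Ioi 0) hf.2.2.1 hf.strictAntiOn_deriv.antitoneOn hx hy

theorem monotoneOn (hf : ProdAssump G f f' f'') : MonotoneOn f (Ioi 0) :=
  fun x hx y hy hxy => by nlinarith [hf.le_tangent hy hx, hf.deriv_pos y hy]

theorem eventually_le_mul (hf : ProdAssump G f f' f'') : ∀ᶠ x in atTop, f x ≤ G * x := by
  obtain ⟨L, hLG, hL⟩ := hf.2.2.2.2.2.2.2.2
  obtain ⟨K, hKG, hK⟩ := ((hL.eventually_lt_const hLG).and (eventually_gt_atTop 0)).exists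
  filter_upwards [eventually_ge_atTop (f K / (G - f' K)), eventually_gt_atTop 0] with x hxK hx
  rw [div_le_iff₀ (sub_pos.2 hKG)] at hxK
  nlinarith [hf.le_tangent hK hx, hf.deriv_pos K hK]

end ProdAssump

section Equilibrium

variable {G : ℝ} {f f' f'' : ℝ → ℝ} {s : ℝ → ℝ → ℝ} {k0 : ℝ} {d : ℕ → ℝ} {k p : ℕ → ℝ}

/-- `Q_t = G^t q_t`: detrended quantities at date `t` are valued at date 0 by `Q_t`. -/
def discount (G : ℝ) (f' : ℝ → ℝ) (k : ℕ → ℝ) (t : ℕ) : ℝ := G ^ t * qseq f' k t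

theorem discount_succ (t : ℕ) :
    discount G f' k (t + 1) = discount G f' k t * G / f' (k (t + 1)) := by
  simp only [discount, qseq, Finset.prod_range_succ, pow_succ, mul_inv]
  ring

theorem discount_pos (hG : 0 < G) (hR : ∀ t, 0 < f' (k (t + 1))) (t : ℕ) :
    0 < discount G f' k t :=
  mul_pos (pow_pos hG t) (inv_pos.2 (Finset.prod_pos fun i _ => hR i))

theorem bubble_eq_discount_inv_mul {t : ℕ} (hQ : discount G f' k t ≠ 0) :
    bubble G f' k p d t = (discount G f' k t)⁻¹ *
      (discount G f' k t * p t - ∑' n, discount G f' k (n + t + 1) * d (n + t + 1)) := by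
  have hterm : ∀ n, qseq f' k (t + 1 + n) * Dseq G d (t + 1 + n) =
      discount G f' k (n + t + 1) * d (n + t + 1) := fun n => by
    rw [show t + 1 + n = n + t + 1 by ring, discount, Dseq]
    ring
  rw [bubble, fundval, tsum_congr hterm, mul_sub, ← mul_assoc, inv_mul_cancel₀ hQ, one_mul,
    discount, mul_inv]

namespace IsEquilibrium

theorem discount_mul_price_succ (he : IsEquilibrium G f f' s k0 d k p) (hG : G ≠ 0)
    {t : ℕ} (hR : f' (k (t + 1)) ≠ 0) :
    discount G f' k (t + 1) * p (t + 1) =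
      discount G f' k t * p t - discount G f' k (t + 1) * d (t + 1) := by
  rw [he.2.2.2.2 t, discount_succ]
  field_simp

theorem capital_add_price_lt (he : IsEquilibrium G f f' s k0 d k p) (hf : ProdAssump G f f' f'')
    (hs : SavAssump s) (t : ℕ) : G * k (t + 1) + p t < f (k t) := by
  have hk := he.1
  rw [he.2.2.2.1 t]
  calc s (f (k t) - k t * f' (k t)) (f' (k (t + 1)))
      < f (k t) - k t * f' (k t) :=
        (hs.2.1 _ (sub_mul_deriv_pos hf.2.1 hf.2.2.1 hf.strictAntiOn_deriv (hk t)) _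
          (hf.deriv_pos _ (hk (t + 1)))).2
    _ < f (k t) := sub_lt_self _ (mul_pos (hk t) (hf.deriv_pos _ (hk t)))

theorem price_bddAbove (he : IsEquilibrium G f f' s k0 d k p) (hf : ProdAssump G f f' f'')
    (hs : SavAssump s) (hk0 : 0 < k0) : ∃ C > 0, ∀ t, p t ≤ C := by
  obtain ⟨M, hfM, hkM⟩ := (hf.eventually_le_mul.and (eventually_ge_atTop k0)).exists
  have hM : 0 < M := hk0.trans_le hkM
  have hfk : ∀ t, k t ≤ M → f (k t) ≤ f M := fun t h => hf.monotoneOn (he.1 t) hM h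
  have hk : ∀ t, k t ≤ M := by
    intro t
    induction t with
    | zero => exact he.2.2.1 ▸ hkM
    | succ t ih =>
      refine le_of_mul_le_mul_left ?_ hf.1
      linarith [he.capital_add_price_lt hf hs t, he.2.1 t, hfk t ih]
  refine ⟨f M, hf.2.1 M hM, fun t => ?_⟩
  linarith [he.capital_add_price_lt hf hs t, mul_pos hf.1 (he.1 (t + 1)), hfk t (hk t)]

theorem summable_and_exists_bubble_eq (he : IsEquilibrium G f f' s k0 d k p) (hG : 0 < G)
    (hR : ∀ x > 0, 0 < f' x) (hd : ∀ t ≥ 1, 0 ≤ d t) :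
    Summable (fun t => discount G f' k (t + 1) * d (t + 1)) ∧
      ∃ L ≥ 0, ∀ t, bubble G f' k p d t = (discount G f' k t)⁻¹ * L ∧
        L ≤ discount G f' k t * p t := by
  set Q := discount G f' k
  have hQ : ∀ t, 0 < Q t := discount_pos hG fun t => hR _ (he.1 (t + 1))
  set c : ℕ → ℝ := fun t => Q (t + 1) * d (t + 1)
  have hc : ∀ t, 0 ≤ c t := fun t => mul_nonneg (hQ _).le (hd _ (Nat.le_add_left 1 t))
  have ha : ∀ t, 0 ≤ Q t * p t := fun t => mul_nonneg (hQ t).le (he.2.1 t)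
  have hrec : ∀ t, Q (t + 1) * p (t + 1) = Q t * p t - c t :=
    fun t => he.discount_mul_price_succ hG.ne' (hR _ (he.1 (t + 1))).ne'
  have hcs : Summable c := summable_of_succ_eq_sub hrec ha hc
  have hconst : ∀ t, Q t * p t - ∑' n, c (n + t) = Q 0 * p 0 - ∑' n, c n :=
    sub_tsum_nat_add_eq_of_succ_eq_sub (a := fun t => Q t * p t) hrec hcs
  refine ⟨hcs, _, sub_nonneg.2 (tsum_le_of_succ_eq_sub hrec ha hc), fun t => ⟨?_, ?_⟩⟩
  · rw [bubble_eq_discount_inv_mul (hQ t).ne', ← hconst t]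
  · have htail : 0 ≤ ∑' n, c (n + t) := tsum_nonneg fun n => hc _
    linarith [hconst t]

end IsEquilibrium

end Equilibrium

/-- Lemma `lem:impossible1`: if `∑_{t≥1} d_t = ∞`, then every
equilibrium is bubbleless. -/
theorem stmt8 (G : ℝ) (f f' f'' : ℝ → ℝ) (s : ℝ → ℝ → ℝ)
    (hf : ProdAssump G f f' f'') (hs : SavAssump s)
    (k0 : ℝ) (hk0 : 0 < k0) (d : ℕ → ℝ) (hd : ∀ t ≥ 1, 0 ≤ d t)
    (hdiv : ¬ Summable (fun t : ℕ => d (t + 1))) :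
    ∀ k p : ℕ → ℝ, IsEquilibrium G f f' s k0 d k p → Bubbleless G f' k p d := by
  intro k p he
  obtain ⟨hcs, L, hL, hb⟩ := he.summable_and_exists_bubble_eq hf.1 hf.deriv_pos hd
  suffices hL0 : L = 0 from fun t => by rw [(hb t).1, hL0, mul_zero]
  by_contra hL0
  obtain ⟨C, hC, hpC⟩ := he.price_bddAbove hf hs hk0
  have hQC : ∀ t, L / C ≤ discount G f' k (t + 1) := fun t => by
    have hQ := discount_pos hf.1 (fun t => hf.deriv_pos _ (he.1 (t + 1))) (t + 1)
    rw [div_le_iff₀ hC]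
    exact (hb (t + 1)).2.trans (mul_le_mul_of_nonneg_left (hpC _) hQ.le)
  exact hdiv (Summable.of_mul_left_of_le (div_pos (hL.lt_of_ne' hL0) hC) hQC
    (fun t => hd _ (Nat.le_add_left 1 t)) hcs)
end
end

section
/- Let (k_t, p_t)_{t≥0} be an equilibrium and set k̄ := limsup_{t→∞} k_t. If f'(k̄) > G (with the convention f'(0) := ∞ in case k̄ = 0), then this equilibrium is bubbleless, and it is the unique equilibrium: any equilibrium with the same initial capital and dividends coincides with it. -/
open Filter Topology Set

noncomputable section

section
variable {G : ℝ} {f f' f'' : ℝ → ℝ}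

lemma PA.contf' (hf : ProdAssump G f f' f'') : ContinuousOn f' (Ioi 0) :=
  fun x hx => ((hf.2.2.2.1 x hx).continuousAt).continuousWithinAt

lemma PA.anti (hf : ProdAssump G f f' f'') : StrictAntiOn f' (Ioi 0) := by
  apply strictAntiOn_of_deriv_neg (convex_Ioi 0) (PA.contf' hf)
  intro x hx
  rw [interior_Ioi] at hx
  rw [(hf.2.2.2.1 x hx).deriv]
  exact hf.2.2.2.2.2.2.1 x hx

lemma PA.fmono (hf : ProdAssump G f f' f'') : StrictMonoOn f (Ioi 0) := by
  apply strictMonoOn_of_deriv_pos (convex_Ioi 0)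
    (fun x hx => ((hf.2.2.1 x hx).continuousAt).continuousWithinAt)
  intro x hx
  rw [interior_Ioi] at hx
  rw [(hf.2.2.1 x hx).deriv]
  exact hf.2.2.2.2.2.1 x hx

lemma PA.wmono (hf : ProdAssump G f f' f'') :
    StrictMonoOn (fun x => f x - x * f' x) (Ioi 0) := by
  apply strictMonoOn_of_deriv_pos (convex_Ioi 0)
  · intro x hx
    exact (((hf.2.2.1 x hx).continuousAt).sub
      (continuousAt_id.mul (hf.2.2.2.1 x hx).continuousAt)).continuousWithinAt
  · intro x hx
    rw [interior_Ioi] at hx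
    have hd : HasDerivAt (fun x => f x - x * f' x) (f' x - (1 * f' x + x * f'' x)) x :=
      (hf.2.2.1 x hx).sub ((hasDerivAt_id x).mul (hf.2.2.2.1 x hx))
    rw [hd.deriv]
    have := hf.2.2.2.2.2.2.1 x hx
    nlinarith [hx.out]

lemma PA.mvt (hf : ProdAssump G f f' f'') {a b : ℝ} (ha : 0 < a) (hab : a < b) :
    ∃ c ∈ Ioo a b, f' c = (f b - f a) / (b - a) := by
  apply exists_hasDerivAt_eq_slope f f' hab
  · intro x hx
    exact ((hf.2.2.1 x (lt_of_lt_of_le ha hx.1)).continuousAt).continuousWithinAt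
  · intro x hx
    exact hf.2.2.1 x (lt_trans ha hx.1)

lemma PA.wnonneg (hf : ProdAssump G f f' f'') {x : ℝ} (hx : 0 < x) :
    0 ≤ f x - x * f' x := by
  have key : ∀ ε ∈ Ioo (0:ℝ) x, -(ε * f' x) < f x - x * f' x := by
    intro ε hε
    obtain ⟨c, hc, hslope⟩ := PA.mvt hf hε.1 hε.2
    have hcx : 0 < c := lt_trans hε.1 hc.1
    have hfx : f' x < f' c := PA.anti hf hcx hx hc.2
    have hbma : 0 < x - ε := by linarith [hε.2]
    have heq : f x - f ε = f' c * (x - ε) := by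
      field_simp at hslope; linarith [hslope]
    have hfε : 0 < f ε := hf.2.1 ε hε.1
    nlinarith
  have hfx : 0 < f' x := hf.2.2.2.2.2.1 x hx
  by_contra h
  push_neg at h
  set ε := min (x/2) (-(f x - x * f' x)/(2 * f' x)) with hε
  have hnum : 0 < -(f x - x * f' x) := by linarith
  have hε0 : 0 < ε := lt_min (by linarith) (by positivity)
  have hεx : ε < x := lt_of_le_of_lt (min_le_left _ _) (by linarith)
  have hk := key ε ⟨hε0, hεx⟩
  have hεle : ε ≤ -(f x - x * f' x)/(2 * f' x) := min_le_right _ _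
  have : ε * (2 * f' x) ≤ -(f x - x * f' x) := by
    rw [le_div_iff₀ (by positivity)] at hεle
    linarith
  nlinarith

lemma PA.wpos (hf : ProdAssump G f f' f'') {x : ℝ} (hx : 0 < x) :
    0 < f x - x * f' x :=
  lt_of_le_of_lt (PA.wnonneg hf (by linarith : (0:ℝ) < x/2))
    (PA.wmono hf (by simp only [Set.mem_Ioi]; linarith) (Set.mem_Ioi.mpr hx) (by linarith))

lemma PA.flin (hf : ProdAssump G f f' f'') :
    ∃ K > 0, ∀ x ≥ K, f x < G * x := by
  obtain ⟨L, hLG, hL⟩ := hf.2.2.2.2.2.2.2.2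
  have hL0 : 0 ≤ L := by
    refine ge_of_tendsto hL ?_
    filter_upwards [eventually_ge_atTop (1:ℝ)] with x hx
    exact le_of_lt (hf.2.2.2.2.2.1 x (by linarith))
  set m := (L + G) / 2 with hm
  have hmG : m < G := by rw [hm]; linarith
  have hm0 : 0 < m := by rw [hm]; linarith [hf.1]
  have hev : ∀ᶠ x in atTop, f' x ≤ m := by
    have := hL.eventually_le_const (show L < m by rw [hm]; linarith)
    exact this
  obtain ⟨K, hK⟩ := (hev.and (eventually_ge_atTop (1:ℝ))).exists_forall_of_atTop
  have hK1 : (1:ℝ) ≤ K ⊔ 1 := le_max_right _ _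
  set K1 := K ⊔ 1 with hK1d
  have hfK1 : ∀ x ≥ K1, f' x ≤ m := fun x hx => (hK x (le_trans (le_max_left _ _) hx)).1
  have hK10 : 0 < K1 := by positivity
  have hfK10 : 0 < f K1 := hf.2.1 K1 hK10
  have hGm : 0 < G - m := by linarith
  refine ⟨K1 + (f K1)/(G - m) + 1, by positivity, ?_⟩
  intro x hx
  have hxK1 : K1 < x := by
    have : 0 < (f K1)/(G-m) := by positivity
    linarith
  obtain ⟨c, hc, hslope⟩ := PA.mvt hf hK10 hxK1
  have hfc : f' c ≤ m := hfK1 c (le_of_lt hc.1)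
  have hbma : 0 < x - K1 := by linarith
  have heq : f x - f K1 = f' c * (x - K1) := by
    field_simp at hslope; linarith [hslope]
  have hfx_le : f x ≤ f K1 + m * (x - K1) := by nlinarith [hc.1, hxK1]
  have hBx : (G - m) * (K1 + (f K1)/(G-m) + 1) ≤ (G - m) * x :=
    mul_le_mul_of_nonneg_left hx (le_of_lt hGm)
  have hB : (G - m) * ((f K1)/(G-m)) = f K1 := by field_simp
  nlinarith

end
section
variable {G : ℝ} {f f' f'' : ℝ → ℝ} {s : ℝ → ℝ → ℝ} {k0 : ℝ} {d : ℕ → ℝ} {k p : ℕ → ℝ}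

lemma EQ.Rpos (hf : ProdAssump G f f' f'') (heq : IsEquilibrium G f f' s k0 d k p) (t : ℕ) :
    0 < f' (k t) := hf.2.2.2.2.2.1 _ (heq.1 t)

lemma EQ.qpos (hf : ProdAssump G f f' f'') (heq : IsEquilibrium G f f' s k0 d k p) (t : ℕ) :
    0 < qseq f' k t := by
  rw [qseq]
  exact inv_pos.mpr (Finset.prod_pos fun i _ => EQ.Rpos hf heq (i+1))

lemma EQ.q_succ (hf : ProdAssump G f f' f'') (heq : IsEquilibrium G f f' s k0 d k p) (t : ℕ) :
    qseq f' k (t+1) = qseq f' k t * (f' (k (t+1)))⁻¹ := by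
  rw [qseq, qseq, Finset.prod_range_succ, mul_inv]

lemma EQ.upos (hf : ProdAssump G f f' f'') (heq : IsEquilibrium G f f' s k0 d k p) (t : ℕ) :
    0 < G ^ t * qseq f' k t := by
  have := EQ.qpos hf heq t
  have := hf.1
  positivity

lemma EQ.step (hf : ProdAssump G f f' f'') (heq : IsEquilibrium G f f' s k0 d k p) (t : ℕ) :
    G ^ (t+1) * qseq f' k (t+1) * p (t+1)
      = G ^ t * qseq f' k t * p t - qseq f' k (t+1) * Dseq G d (t+1) := by
  have hR : f' (k (t+1)) ≠ 0 := ne_of_gt (EQ.Rpos hf heq (t+1))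
  have hG : (G:ℝ) ≠ 0 := ne_of_gt hf.1
  rw [heq.2.2.2.2 t, EQ.q_succ hf heq, Dseq]
  field_simp
  ring

lemma EQ.sum_eq (hf : ProdAssump G f f' f'') (heq : IsEquilibrium G f f' s k0 d k p) (T : ℕ) :
    ∑ i ∈ Finset.range T, qseq f' k (i+1) * Dseq G d (i+1)
      = p 0 - G ^ T * qseq f' k T * p T := by
  induction T with
  | zero => simp [qseq]
  | succ T ih =>
    rw [Finset.sum_range_succ, ih, EQ.step hf heq T]
    ring

lemma EQ.c_nonneg (hf : ProdAssump G f f' f'') (heq : IsEquilibrium G f f' s k0 d k p)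
    (hd : ∀ t ≥ 1, 0 ≤ d t) (n : ℕ) :
    0 ≤ qseq f' k (n+1) * Dseq G d (n+1) := by
  have h1 := EQ.qpos hf heq (n+1)
  have h2 : 0 ≤ Dseq G d (n+1) := by
    rw [Dseq]
    have := hd (n+1) (by omega)
    have := hf.1
    positivity
  positivity

lemma EQ.summable (hf : ProdAssump G f f' f'') (heq : IsEquilibrium G f f' s k0 d k p)
    (hd : ∀ t ≥ 1, 0 ≤ d t) :
    Summable (fun n => qseq f' k (n+1) * Dseq G d (n+1)) := by
  apply summable_of_sum_range_le (c := p 0) (EQ.c_nonneg hf heq hd)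
  intro T
  rw [EQ.sum_eq hf heq T]
  have h1 := EQ.upos hf heq T
  have h2 := heq.2.1 T
  nlinarith

lemma EQ.tsum_le (hf : ProdAssump G f f' f'') (heq : IsEquilibrium G f f' s k0 d k p)
    (hd : ∀ t ≥ 1, 0 ≤ d t) :
    ∑' n, qseq f' k (n+1) * Dseq G d (n+1) ≤ p 0 := by
  apply Summable.tsum_le_of_sum_range_le (EQ.summable hf heq hd)
  intro T
  rw [EQ.sum_eq hf heq T]
  have h1 := EQ.upos hf heq T
  have h2 := heq.2.1 T
  nlinarith

lemma EQ.summable_tail (hf : ProdAssump G f f' f'') (heq : IsEquilibrium G f f' s k0 d k p)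
    (hd : ∀ t ≥ 1, 0 ≤ d t) (t : ℕ) :
    Summable (fun n => qseq f' k (t+1+n) * Dseq G d (t+1+n)) := by
  have := ((summable_nat_add_iff (f := fun n => qseq f' k (n+1) * Dseq G d (n+1)) t).2
    (EQ.summable hf heq hd))
  exact this.congr (fun n => by rw [show n+t+1 = t+1+n by omega])

lemma EQ.tail_eq (hf : ProdAssump G f f' f'') (heq : IsEquilibrium G f f' s k0 d k p)
    (hd : ∀ t ≥ 1, 0 ≤ d t) (t : ℕ) :
    ∑' n, qseq f' k (t+1+n) * Dseq G d (t+1+n)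
      = (∑' n, qseq f' k (n+1) * Dseq G d (n+1))
        - ∑ i ∈ Finset.range t, qseq f' k (i+1) * Dseq G d (i+1) := by
  have h := Summable.sum_add_tsum_nat_add (f := fun n => qseq f' k (n+1) * Dseq G d (n+1)) t
    (EQ.summable hf heq hd)
  have h2 : ∑' n, qseq f' k (t+1+n) * Dseq G d (t+1+n)
      = ∑' n, qseq f' k (n+t+1) * Dseq G d (n+t+1) :=
    tsum_congr (fun n => by congr 2 <;> omega)
  rw [h2]
  have h3 : ∑' n, qseq f' k (n+t+1) * Dseq G d (n+t+1)
      = ∑' (i : ℕ), qseq f' k (i + t + 1) * Dseq G d (i + t + 1) := rfl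
  linarith [h]

lemma EQ.fundval_eq (hf : ProdAssump G f f' f'') (heq : IsEquilibrium G f f' s k0 d k p)
    (t : ℕ) :
    fundval G f' k d t = (G ^ t * qseq f' k t)⁻¹ * ∑' n, qseq f' k (t+1+n) * Dseq G d (t+1+n) := by
  rw [fundval, mul_inv]

lemma EQ.fundval_nonneg (hf : ProdAssump G f f' f'') (heq : IsEquilibrium G f f' s k0 d k p)
    (hd : ∀ t ≥ 1, 0 ≤ d t) (t : ℕ) :
    0 ≤ fundval G f' k d t := by
  rw [EQ.fundval_eq hf heq]
  have h1 := EQ.upos hf heq t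
  have h2 : 0 ≤ ∑' n, qseq f' k (t+1+n) * Dseq G d (t+1+n) :=
    tsum_nonneg (fun n => by
      have := EQ.c_nonneg hf heq hd (t+n)
      rwa [show t+n+1 = t+1+n by omega] at this)
  exact mul_nonneg (le_of_lt (inv_pos.mpr h1)) h2

lemma EQ.bubble_nonneg (hf : ProdAssump G f f' f'') (heq : IsEquilibrium G f f' s k0 d k p)
    (hd : ∀ t ≥ 1, 0 ≤ d t) (t : ℕ) :
    0 ≤ bubble G f' k p d t := by
  rw [bubble, sub_nonneg, EQ.fundval_eq hf heq]
  have hu := EQ.upos hf heq t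
  rw [inv_mul_le_iff₀ hu, EQ.tail_eq hf heq hd, EQ.sum_eq hf heq t]
  have := EQ.tsum_le hf heq hd
  linarith

end
section
variable {G : ℝ} {f f' f'' : ℝ → ℝ} {s : ℝ → ℝ → ℝ} {k0 : ℝ} {d : ℕ → ℝ} {k p : ℕ → ℝ}

lemma EQ.fundval_rec (hf : ProdAssump G f f' f'') (heq : IsEquilibrium G f f' s k0 d k p)
    (hd : ∀ t ≥ 1, 0 ≤ d t) (t : ℕ) :
    fundval G f' k d (t+1) = f' (k (t+1)) / G * fundval G f' k d t - d (t+1) := by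
  have hS : ∑' n, qseq f' k (t+1+n) * Dseq G d (t+1+n)
      = qseq f' k (t+1) * Dseq G d (t+1) + ∑' n, qseq f' k (t+1+1+n) * Dseq G d (t+1+1+n) := by
    rw [Summable.tsum_eq_zero_add (EQ.summable_tail hf heq hd t)]
    congr 1
    exact tsum_congr (fun n => by rw [show t+1+(n+1) = t+1+1+n by omega])
  rw [EQ.fundval_eq hf heq (t+1), EQ.fundval_eq hf heq t, hS, EQ.q_succ hf heq t, Dseq]
  have hG : (G:ℝ) ≠ 0 := ne_of_gt hf.1
  have hq : qseq f' k t ≠ 0 := ne_of_gt (EQ.qpos hf heq t)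
  have hR : f' (k (t+1)) ≠ 0 := ne_of_gt (EQ.Rpos hf heq (t+1))
  have hGt : (G:ℝ)^t ≠ 0 := pow_ne_zero _ hG
  field_simp
  ring

lemma EQ.bubble_rec (hf : ProdAssump G f f' f'') (heq : IsEquilibrium G f f' s k0 d k p)
    (hd : ∀ t ≥ 1, 0 ≤ d t) (t : ℕ) :
    bubble G f' k p d (t+1) = f' (k (t+1)) / G * bubble G f' k p d t := by
  rw [bubble, bubble, EQ.fundval_rec hf heq hd t, heq.2.2.2.2 t]
  ring

lemma EQ.bubble_prod (hf : ProdAssump G f f' f'') (heq : IsEquilibrium G f f' s k0 d k p)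
    (hd : ∀ t ≥ 1, 0 ≤ d t) (t : ℕ) :
    bubble G f' k p d 0 = (G ^ t * qseq f' k t) * bubble G f' k p d t := by
  induction t with
  | zero => simp [qseq]
  | succ t ih =>
    rw [ih, EQ.bubble_rec hf heq hd t, EQ.q_succ hf heq t]
    have hG : (G:ℝ) ≠ 0 := ne_of_gt hf.1
    have hR : f' (k (t+1)) ≠ 0 := ne_of_gt (EQ.Rpos hf heq (t+1))
    field_simp
    ring

lemma EQ.wt_pos (hf : ProdAssump G f f' f'') (heq : IsEquilibrium G f f' s k0 d k p) (t : ℕ) :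
    0 < f (k t) - k t * f' (k t) := PA.wpos hf (heq.1 t)

lemma EQ.klt (hf : ProdAssump G f f' f'') (hs : SavAssump s)
    (heq : IsEquilibrium G f f' s k0 d k p) (t : ℕ) :
    G * k (t+1) + p t < f (k t) - k t * f' (k t) := by
  rw [heq.2.2.2.1 t]
  exact (hs.2.1 _ (EQ.wt_pos hf heq t) _ (EQ.Rpos hf heq (t+1))).2

lemma EQ.kbound (hf : ProdAssump G f f' f'') (hs : SavAssump s)
    (heq : IsEquilibrium G f f' s k0 d k p) :
    ∃ M > 0, ∀ t, k t ≤ M := by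
  obtain ⟨K, hK0, hK⟩ := PA.flin hf
  have hG := hf.1
  have hfK : 0 < f K := hf.2.1 K hK0
  refine ⟨max (max (k 0) K) (f K / G), lt_of_lt_of_le hK0 (le_trans (le_max_right _ _)
    (le_max_left _ _)), ?_⟩
  set M := max (max (k 0) K) (f K / G) with hM
  have hkf : ∀ t, G * k (t+1) < f (k t) := by
    intro t
    have h1 := EQ.klt hf hs heq t
    have h2 := heq.2.1 t
    have h3 := mul_pos (heq.1 t) (EQ.Rpos hf heq t)
    linarith
  intro t
  induction t with
  | zero => exact le_trans (le_max_left _ _) (le_max_left _ _)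
  | succ t ih =>
    rcases le_or_gt (k t) K with h | h
    · have : f (k t) ≤ f K := by
        rcases eq_or_lt_of_le h with h' | h'
        · rw [h']
        · exact le_of_lt (PA.fmono hf (heq.1 t) hK0 h')
      have := hkf t
      have : k (t+1) ≤ f K / G := by
        rw [le_div_iff₀ hG]
        linarith
      exact le_trans this (le_max_right _ _)
    · have := hK (k t) (le_of_lt h)
      have := hkf t
      nlinarith [heq.1 (t+1), ih]

lemma EQ.pbound (hf : ProdAssump G f f' f'') (hs : SavAssump s)
    (heq : IsEquilibrium G f f' s k0 d k p) {M : ℝ} (hM0 : 0 < M) (hM : ∀ t, k t ≤ M) (t : ℕ) :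
    p t ≤ f M - M * f' M := by
  have h1 := EQ.klt hf hs heq t
  have h2 : f (k t) - k t * f' (k t) ≤ f M - M * f' M := by
    rcases eq_or_lt_of_le (hM t) with h' | h'
    · rw [h']
    · exact le_of_lt (PA.wmono hf (heq.1 t) hM0 h')
  nlinarith [mul_pos hG_aux (heq.1 (t+1))]
  where hG_aux := hf.1

end
section
variable {G : ℝ} {f f' f'' : ℝ → ℝ} {s : ℝ → ℝ → ℝ} {k0 : ℝ} {d : ℕ → ℝ} {k p : ℕ → ℝ}

lemma EQ.evR (hf : ProdAssump G f f' f'') (hs : SavAssump s)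
    (heq : IsEquilibrium G f f' s k0 d k p)
    (hkbar : atTop.limsup k = 0 ∨
      (0 < atTop.limsup k ∧ G < f' (atTop.limsup k))) :
    ∃ G' > G, ∀ᶠ t in atTop, G' ≤ f' (k t) := by
  obtain ⟨M, hM0, hM⟩ := EQ.kbound hf hs heq
  have hbdd : IsBoundedUnder (· ≤ ·) atTop k :=
    Filter.isBoundedUnder_of ⟨M, hM⟩
  rcases hkbar with h0 | ⟨hpos, hfG⟩
  · -- limsup k = 0, use f' → ∞ at 0+
    have h1 : {x : ℝ | G + 1 ≤ f' x} ∈ nhdsWithin 0 (Ioi 0) :=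
      hf.2.2.2.2.2.2.2.1 (eventually_ge_atTop (G+1))
    obtain ⟨u, hu, huS⟩ := (mem_nhdsGT_iff_exists_Ioo_subset).1 h1
    have hev : ∀ᶠ t in atTop, k t < u := by
      apply Filter.eventually_lt_of_limsup_lt _ hbdd
      rw [h0]; exact hu
    refine ⟨G + 1, by linarith [hf.1], ?_⟩
    filter_upwards [hev] with t ht
    exact huS ⟨heq.1 t, ht⟩
  · -- limsup k > 0
    have hcont : ContinuousAt f' (atTop.limsup k) := (hf.2.2.2.1 _ hpos).continuousAt
    have h1 : {x : ℝ | G < f' x} ∈ nhds (atTop.limsup k) :=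
      hcont.preimage_mem_nhds (Ioi_mem_nhds hfG)
    obtain ⟨ε, hε0, hball⟩ := Metric.mem_nhds_iff.1 h1
    have hx0mem : G < f' (atTop.limsup k + ε/2) := by
      apply hball
      rw [Metric.mem_ball, Real.dist_eq, show atTop.limsup k + ε/2 - atTop.limsup k = ε/2 by ring,
        abs_of_pos (by linarith)]
      linarith
    have hx0pos : (0:ℝ) < atTop.limsup k + ε/2 := by linarith
    have hev : ∀ᶠ t in atTop, k t < atTop.limsup k + ε/2 := by
      apply Filter.eventually_lt_of_limsup_lt _ hbdd
      linarith
    refine ⟨f' (atTop.limsup k + ε/2), hx0mem, ?_⟩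
    filter_upwards [hev] with t ht
    exact le_of_lt (PA.anti hf (heq.1 t) hx0pos ht)

lemma EQ.bubbleless (hf : ProdAssump G f f' f'') (hs : SavAssump s)
    (heq : IsEquilibrium G f f' s k0 d k p) (hd : ∀ t ≥ 1, 0 ≤ d t)
    (hkbar : atTop.limsup k = 0 ∨
      (0 < atTop.limsup k ∧ G < f' (atTop.limsup k))) :
    Bubbleless G f' k p d := by
  obtain ⟨G', hG'G, hev⟩ := EQ.evR hf hs heq hkbar
  obtain ⟨M, hM0, hM⟩ := EQ.kbound hf hs heq
  have hG := hf.1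
  have hG'0 : 0 < G' := lt_trans hG hG'G
  set ρ := G / G' with hρ
  have hρ0 : 0 ≤ ρ := le_of_lt (div_pos hG hG'0)
  have hρ1 : ρ < 1 := (div_lt_one hG'0).2 hG'G
  obtain ⟨T, hT⟩ := Filter.eventually_atTop.1 hev
  set u := fun t => G ^ t * qseq f' k t with hu
  have hupos : ∀ t, 0 < u t := fun t => EQ.upos hf heq t
  have hustep : ∀ t, u (t+1) = u t * (G / f' (k (t+1))) := by
    intro t
    rw [hu]
    simp only
    rw [EQ.q_succ hf heq t, pow_succ]
    field_simp
  have hudec : ∀ n, u (T + n) ≤ u T * ρ ^ n := by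
    intro n
    induction n with
    | zero => simp
    | succ n ih =>
      have hstep := hustep (T + n)
      have hR : G' ≤ f' (k (T + n + 1)) := hT (T + n + 1) (by omega)
      have hfrac : G / f' (k (T + n + 1)) ≤ ρ := by
        rw [hρ]
        apply div_le_div_of_nonneg_left (le_of_lt hG) hG'0 hR
      have : u (T + (n+1)) = u (T + n) * (G / f' (k (T + n + 1))) := by
        rw [show T + (n+1) = (T + n) + 1 by omega, hstep]
      rw [this, pow_succ]
      have h1 : 0 < u (T + n) := hupos _
      nlinarith [hupos (T+n), div_pos hG (EQ.Rpos hf heq (T+n+1))]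
  set W := f M - M * f' M with hW
  have hWpos : 0 < W := PA.wpos hf hM0
  have hble : ∀ t, bubble G f' k p d t ≤ W := by
    intro t
    have h1 : bubble G f' k p d t ≤ p t := by
      rw [bubble]
      have := EQ.fundval_nonneg hf heq hd t
      linarith
    exact le_trans h1 (EQ.pbound hf hs heq hM0 hM t)
  have hb0 : ∀ n, bubble G f' k p d 0 ≤ (u T * W) * ρ ^ n := by
    intro n
    rw [EQ.bubble_prod hf heq hd (T + n)]
    calc u (T+n) * bubble G f' k p d (T+n) ≤ u (T+n) * W :=
          mul_le_mul_of_nonneg_left (hble _) (le_of_lt (hupos _))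
      _ ≤ (u T * ρ ^ n) * W := mul_le_mul_of_nonneg_right (hudec n) (le_of_lt hWpos)
      _ = (u T * W) * ρ ^ n := by ring
  have htend : Tendsto (fun n : ℕ => (u T * W) * ρ ^ n) atTop (nhds 0) := by
    have := tendsto_pow_atTop_nhds_zero_of_lt_one hρ0 hρ1
    simpa using this.const_mul (u T * W)
  have hb00 : bubble G f' k p d 0 ≤ 0 :=
    ge_of_tendsto htend (Filter.Eventually.of_forall hb0)
  have hb0eq : bubble G f' k p d 0 = 0 :=
    le_antisymm hb00 (EQ.bubble_nonneg hf heq hd 0)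
  intro t
  have := EQ.bubble_prod hf heq hd t
  rw [hb0eq] at this
  have hu0 : u t ≠ 0 := ne_of_gt (hupos t)
  rcases mul_eq_zero.1 this.symm with h | h
  · exact absurd h hu0
  · exact h

end
section
variable {G : ℝ} {f f' f'' : ℝ → ℝ} {s : ℝ → ℝ → ℝ} {k0 : ℝ} {d : ℕ → ℝ}

lemma EQ.root_le (hf : ProdAssump G f f' f'') (hs : SavAssump s) {w1 w2 p1 p2 x1 x2 : ℝ}
    (hw1 : 0 < w1) (hw2 : 0 < w2) (hx1 : 0 < x1) (hx2 : 0 < x2)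
    (hw : w1 ≤ w2) (hp : p2 ≤ p1)
    (he1 : G * x1 + p1 = s w1 (f' x1)) (he2 : G * x2 + p2 = s w2 (f' x2)) : x1 ≤ x2 := by
  by_contra hcon
  push_neg at hcon
  have hfm : f' x1 < f' x2 := PA.anti hf (Set.mem_Ioi.mpr hx2) (Set.mem_Ioi.mpr hx1) hcon
  have hR1 : 0 < f' x1 := hf.2.2.2.2.2.1 x1 hx1
  have hR2 : 0 < f' x2 := hf.2.2.2.2.2.1 x2 hx2
  have h1 : s w1 (f' x1) ≤ s w1 (f' x2) :=
    hs.2.2.2 w1 hw1 (Set.mem_Ioi.mpr hR1) (Set.mem_Ioi.mpr hR2) (le_of_lt hfm)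
  have h2 : s w1 (f' x2) ≤ s w2 (f' x2) := by
    rcases eq_or_lt_of_le hw with he | hlt
    · rw [he]
    · exact le_of_lt (hs.2.2.1 (f' x2) hR2 (Set.mem_Ioi.mpr hw1) (Set.mem_Ioi.mpr hw2) hlt)
  nlinarith [mul_pos hf.1 (sub_pos.mpr hcon)]

lemma EQ.cmp_ge (hf : ProdAssump G f f' f'') (hs : SavAssump s) {k1 p1 k2 p2 : ℕ → ℝ}
    (heq1 : IsEquilibrium G f f' s k0 d k1 p1) (heq2 : IsEquilibrium G f f' s k0 d k2 p2)
    (h : p1 0 ≤ p2 0) : ∀ t, k2 t ≤ k1 t ∧ p1 t ≤ p2 t := by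
  intro t
  induction t with
  | zero => exact ⟨le_of_eq (heq2.2.2.1.trans heq1.2.2.1.symm), h⟩
  | succ t ih =>
    obtain ⟨ihk, ihp⟩ := ih
    have hw : f (k2 t) - k2 t * f' (k2 t) ≤ f (k1 t) - k1 t * f' (k1 t) := by
      rcases eq_or_lt_of_le ihk with he | hlt
      · rw [he]
      · exact le_of_lt (PA.wmono hf (Set.mem_Ioi.mpr (heq2.1 t)) (Set.mem_Ioi.mpr (heq1.1 t)) hlt)
    have hk1 : k2 (t+1) ≤ k1 (t+1) :=
      EQ.root_le hf hs (EQ.wt_pos hf heq2 t) (EQ.wt_pos hf heq1 t)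
        (heq2.1 (t+1)) (heq1.1 (t+1)) hw ihp (heq2.2.2.2.1 t) (heq1.2.2.2.1 t)
    refine ⟨hk1, ?_⟩
    rw [heq1.2.2.2.2 t, heq2.2.2.2.2 t]
    have hRR : f' (k1 (t+1)) ≤ f' (k2 (t+1)) := by
      rcases eq_or_lt_of_le hk1 with he | hlt
      · rw [he]
      · exact le_of_lt (PA.anti hf (Set.mem_Ioi.mpr (heq2.1 (t+1)))
          (Set.mem_Ioi.mpr (heq1.1 (t+1))) hlt)
    have hmul : f' (k1 (t+1)) * p1 t ≤ f' (k2 (t+1)) * p2 t :=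
      mul_le_mul hRR ihp (heq1.2.1 t) (le_of_lt (EQ.Rpos hf heq2 (t+1)))
    rw [div_mul_eq_mul_div, div_mul_eq_mul_div]
    have := (div_le_div_iff_of_pos_right hf.1).2 hmul
    linarith

lemma EQ.q_mono (hf : ProdAssump G f f' f'') {ka kb : ℕ → ℝ} {pa pb : ℕ → ℝ}
    (heqa : IsEquilibrium G f f' s k0 d ka pa) (heqb : IsEquilibrium G f f' s k0 d kb pb)
    (hR : ∀ i, f' (ka (i+1)) ≤ f' (kb (i+1))) (m : ℕ) :
    qseq f' kb m ≤ qseq f' ka m := by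
  rw [qseq, qseq]
  apply inv_anti₀
  · exact Finset.prod_pos fun i _ => EQ.Rpos hf heqa (i+1)
  · exact Finset.prod_le_prod (fun i _ => le_of_lt (EQ.Rpos hf heqa (i+1)))
      (fun i _ => hR i)

lemma EQ.fundval0_mono (hf : ProdAssump G f f' f'') {ka kb : ℕ → ℝ} {pa pb : ℕ → ℝ}
    (heqa : IsEquilibrium G f f' s k0 d ka pa) (heqb : IsEquilibrium G f f' s k0 d kb pb)
    (hd : ∀ t ≥ 1, 0 ≤ d t)
    (hR : ∀ i, f' (ka (i+1)) ≤ f' (kb (i+1))) :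
    fundval G f' kb d 0 ≤ fundval G f' ka d 0 := by
  have e : ∀ (kx : ℕ → ℝ), fundval G f' kx d 0
      = ∑' n, qseq f' kx (0+1+n) * Dseq G d (0+1+n) := by
    intro kx
    rw [fundval]
    norm_num [qseq]
  rw [e ka, e kb]
  apply Summable.tsum_le_tsum _ (EQ.summable_tail hf heqb hd 0) (EQ.summable_tail hf heqa hd 0)
  intro n
  have hD : 0 ≤ Dseq G d (0+1+n) := by
    rw [Dseq]
    have := hd (0+1+n) (by omega)
    have := hf.1
    positivity
  exact mul_le_mul_of_nonneg_right (EQ.q_mono hf heqa heqb hR (0+1+n)) hD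

end

/-- Lemma `lem:impossible2`: if `k̄ = limsup k_t` satisfies
`f'(k̄) > G` (with the convention `f'(0) = ∞` when `k̄ = 0`), then the equilibrium
is bubbleless and unique. -/
theorem stmt9 (G : ℝ) (f f' f'' : ℝ → ℝ) (s : ℝ → ℝ → ℝ)
    (hf : ProdAssump G f f' f'') (hs : SavAssump s)
    (k0 : ℝ) (hk0 : 0 < k0) (d : ℕ → ℝ) (hd : ∀ t ≥ 1, 0 ≤ d t)
    (k p : ℕ → ℝ) (heq : IsEquilibrium G f f' s k0 d k p)
    (hkbar : atTop.limsup k = 0 ∨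
      (0 < atTop.limsup k ∧ G < f' (atTop.limsup k))) :
    Bubbleless G f' k p d ∧
    ∀ k' p' : ℕ → ℝ, IsEquilibrium G f f' s k0 d k' p' →
      (∀ t, k' t = k t) ∧ (∀ t, p' t = p t) := by

  have hBL : Bubbleless G f' k p d := EQ.bubbleless hf hs heq hd hkbar
  refine ⟨hBL, ?_⟩
  intro k' p' heq'
  have hv0 : p 0 = fundval G f' k d 0 := by
    have := hBL 0
    rw [bubble] at this
    linarith
  have hp0 : p' 0 = p 0 := by
    rcases lt_trichotomy (p' 0) (p 0) with hlt | he | hgt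
    · exfalso
      have hcmp := EQ.cmp_ge hf hs heq' heq (le_of_lt hlt)
      have hR : ∀ i, f' (k' (i+1)) ≤ f' (k (i+1)) := by
        intro i
        rcases eq_or_lt_of_le (hcmp (i+1)).1 with he | hlt2
        · rw [he]
        · exact le_of_lt (PA.anti hf (Set.mem_Ioi.mpr (heq.1 (i+1)))
            (Set.mem_Ioi.mpr (heq'.1 (i+1))) hlt2)
      have h1 : fundval G f' k d 0 ≤ fundval G f' k' d 0 :=
        EQ.fundval0_mono hf heq' heq hd hR
      have h2 : fundval G f' k' d 0 ≤ p' 0 := by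
        have := EQ.bubble_nonneg hf heq' hd 0
        rw [bubble] at this
        linarith
      linarith
    · exact he
    · exfalso
      have hcmp := EQ.cmp_ge hf hs heq heq' (le_of_lt hgt)
      obtain ⟨M, hM0, hM⟩ := EQ.kbound hf hs heq
      have hll : atTop.limsup k' ≤ atTop.limsup k :=
        Filter.limsup_le_limsup (Filter.Eventually.of_forall (fun t => (hcmp t).1))
          ((Filter.isBoundedUnder_of (⟨0, fun t => le_of_lt (heq'.1 t)⟩ :
              ∃ b, ∀ t, b ≤ k' t) :
            Filter.IsBoundedUnder (· ≥ ·) atTop k').isCoboundedUnder_le)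
          (Filter.isBoundedUnder_of ⟨M, hM⟩)
      have hl0 : 0 ≤ atTop.limsup k' :=
        Filter.le_limsup_of_frequently_le
          (Filter.Frequently.of_forall (fun t => le_of_lt (heq'.1 t)))
          (Filter.isBoundedUnder_of ⟨M, fun t => le_trans (hcmp t).1 (hM t)⟩)
      have hkbar' : atTop.limsup k' = 0 ∨
          (0 < atTop.limsup k' ∧ G < f' (atTop.limsup k')) := by
        rcases eq_or_lt_of_le hl0 with h0 | h0
        · exact Or.inl h0.symm
        · right
          refine ⟨h0, ?_⟩
          rcases hkbar with hc | ⟨hc1, hc2⟩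
          · exfalso; rw [hc] at hll; linarith
          · rcases eq_or_lt_of_le hll with he2 | he2
            · rw [he2]; exact hc2
            · exact lt_trans hc2 (PA.anti hf (Set.mem_Ioi.mpr h0)
                (Set.mem_Ioi.mpr hc1) he2)
      have hBL' := EQ.bubbleless hf hs heq' hd hkbar'
      have hv0' : p' 0 = fundval G f' k' d 0 := by
        have := hBL' 0
        rw [bubble] at this
        linarith
      have hR : ∀ i, f' (k (i+1)) ≤ f' (k' (i+1)) := by
        intro i
        rcases eq_or_lt_of_le (hcmp (i+1)).1 with he | hlt2
        · rw [he]
        · exact le_of_lt (PA.anti hf (Set.mem_Ioi.mpr (heq'.1 (i+1)))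
            (Set.mem_Ioi.mpr (heq.1 (i+1))) hlt2)
      have h1 : fundval G f' k' d 0 ≤ fundval G f' k d 0 :=
        EQ.fundval0_mono hf heq heq' hd hR
      linarith
  have key : ∀ t, k' t = k t ∧ p' t = p t := by
    intro t
    induction t with
    | zero => exact ⟨heq'.2.2.1.trans heq.2.2.1.symm, hp0⟩
    | succ t ih =>
      obtain ⟨ihk, ihp⟩ := ih
      have he1 := heq'.2.2.2.1 t
      rw [ihk, ihp] at he1
      have he2 := heq.2.2.2.1 t
      have hkk : k' (t+1) = k (t+1) := by
        apply le_antisymm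
        · exact EQ.root_le hf hs (EQ.wt_pos hf heq t) (EQ.wt_pos hf heq t)
            (heq'.1 (t+1)) (heq.1 (t+1)) le_rfl le_rfl he1 he2
        · exact EQ.root_le hf hs (EQ.wt_pos hf heq t) (EQ.wt_pos hf heq t)
            (heq.1 (t+1)) (heq'.1 (t+1)) le_rfl le_rfl he2 he1
      refine ⟨hkk, ?_⟩
      rw [heq'.2.2.2.2 t, heq.2.2.2.2 t, hkk, ihp]
  exact ⟨fun t => (key t).1, fun t => (key t).2⟩

end
end
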